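/- arXiv:1107.1344 — 2 statements merged into one kernel-verified Lean document; each statement's English description precedes it below -/
import Mathlib

section
/- In 4-dimensional Minkowski spacetime ds² = −dt² + dx² + dy² + dz², for each pair of constants t₀ ∈ ℝ, x₀ ∈ ℝ, the surface S defined by x = x₀ and e^{t₀ − t} = cosh z (parametrized by (y,z)) is a spacelike surface whose mean curvature vector is future-pointing timelike everywhere, i.e. S is a future-trapped (non-compact) surface. -/
/-!
The only non-zero second derivative of the embedding is `∂_z²Φ = -sech² z ∂_t`, and the
inverse induced metric is `diag(1, cosh² z)`, so `g(n, H) = g(n, ∂_t)` for every normal `n`: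
the mean curvature vector is the normal projection of `∂_t`, namely
`H = (cosh² z, 0, 0, -sinh z cosh z)`, with `g(H, H) = -cosh² z < 0` and `H⁰ = cosh² z > 0`.
-/

noncomputable section

/-- Minkowski inner product on ℝ^{1,3}, signature (−,+,+,+). -/
def mink (u w : Fin 4 → ℝ) : ℝ := -(u 0 * w 0) + u 1 * w 1 + u 2 * w 2 + u 3 * w 3

/-- The surface x = x₀, e^{t₀−t} = cosh z, parametrized by (y,z). -/
def Φemb (t₀ x₀ : ℝ) (y z : ℝ) : Fin 4 → ℝ :=
  ![t₀ - Real.log (Real.cosh z), x₀, y, z]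

/-- Tangent vector ∂_y Φ. -/
def ey (t₀ x₀ y z : ℝ) : Fin 4 → ℝ := fun i => deriv (fun s => Φemb t₀ x₀ s z i) y
/-- Tangent vector ∂_z Φ. -/
def ez (t₀ x₀ y z : ℝ) : Fin 4 → ℝ := fun i => deriv (fun s => Φemb t₀ x₀ y s i) z
/-- Second partial derivatives of the embedding. -/
def dyy (t₀ x₀ y z : ℝ) : Fin 4 → ℝ := fun i => deriv (fun s => ey t₀ x₀ s z i) y
def dyz (t₀ x₀ y z : ℝ) : Fin 4 → ℝ := fun i => deriv (fun s => ey t₀ x₀ y s i) z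
def dzy (t₀ x₀ y z : ℝ) : Fin 4 → ℝ := fun i => deriv (fun s => ez t₀ x₀ s z i) y
def dzz (t₀ x₀ y z : ℝ) : Fin 4 → ℝ := fun i => deriv (fun s => ez t₀ x₀ y s i) z

/-- Induced metric γ_{AB}. -/
def indMetric (t₀ x₀ y z : ℝ) : Matrix (Fin 2) (Fin 2) ℝ :=
  !![mink (ey t₀ x₀ y z) (ey t₀ x₀ y z), mink (ey t₀ x₀ y z) (ez t₀ x₀ y z);
     mink (ez t₀ x₀ y z) (ey t₀ x₀ y z), mink (ez t₀ x₀ y z) (ez t₀ x₀ y z)]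

open Real Matrix

lemma mink_vec_right (u : Fin 4 → ℝ) (b₀ b₁ b₂ b₃ : ℝ) :
    mink u ![b₀, b₁, b₂, b₃] = -(u 0 * b₀) + u 1 * b₁ + u 2 * b₂ + u 3 * b₃ := rfl

lemma mink_vec (a₀ a₁ a₂ a₃ b₀ b₁ b₂ b₃ : ℝ) :
    mink ![a₀, a₁, a₂, a₃] ![b₀, b₁, b₂, b₃] = -(a₀ * b₀) + a₁ * b₁ + a₂ * b₂ + a₃ * b₃ := rfl

lemma one_sub_tanh_sq (z : ℝ) : 1 - tanh z ^ 2 = (cosh z ^ 2)⁻¹ := by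
  rw [tanh_eq_sinh_div_cosh]
  field_simp [(cosh_pos z).ne']
  linear_combination cosh_sq_sub_sinh_sq z

lemma hasDerivAt_log_cosh (z : ℝ) : HasDerivAt (fun s => log (cosh s)) (tanh z) z := by
  simpa [tanh_eq_sinh_div_cosh] using (hasDerivAt_cosh z).log (cosh_pos z).ne'

lemma hasDerivAt_tanh (z : ℝ) : HasDerivAt tanh (cosh z ^ 2)⁻¹ z := by
  have h := (hasDerivAt_sinh z).div (hasDerivAt_cosh z) (cosh_pos z).ne'
  rw [show cosh z * cosh z - sinh z * sinh z = 1 by linear_combination cosh_sq_sub_sinh_sq z,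
    one_div] at h
  rwa [show tanh = sinh / cosh from funext tanh_eq_sinh_div_cosh]

section Surface

variable (t₀ x₀ y z : ℝ)

lemma ey_eq : ey t₀ x₀ y z = ![0, 0, 1, 0] := by
  funext i
  fin_cases i <;> simp [ey, Φemb]

lemma ez_eq : ez t₀ x₀ y z = ![-tanh z, 0, 0, 1] := by
  funext i
  fin_cases i <;> simp [ez, Φemb, ((hasDerivAt_log_cosh z).const_sub t₀).deriv]

lemma dyy_eq : dyy t₀ x₀ y z = 0 := by
  funext i
  simp [dyy, ey_eq]

lemma dyz_eq : dyz t₀ x₀ y z = 0 := by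
  funext i
  simp [dyz, ey_eq]

lemma dzy_eq : dzy t₀ x₀ y z = 0 := by
  funext i
  simp [dzy, ez_eq]

lemma dzz_eq : dzz t₀ x₀ y z = ![-(cosh z ^ 2)⁻¹, 0, 0, 0] := by
  funext i
  fin_cases i <;> simp [dzz, ez_eq, (hasDerivAt_tanh z).deriv]

lemma indMetric_eq : indMetric t₀ x₀ y z = diagonal ![1, (cosh z ^ 2)⁻¹] := by
  have hzz : mink (ez t₀ x₀ y z) (ez t₀ x₀ y z) = (cosh z ^ 2)⁻¹ := by
    rw [ez_eq, mink_vec, ← one_sub_tanh_sq]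
    ring
  rw [indMetric, hzz]
  ext i j
  fin_cases i <;> fin_cases j <;> simp [ey_eq, ez_eq, mink_vec]

lemma indMetric_inv : (indMetric t₀ x₀ y z)⁻¹ = diagonal ![1, cosh z ^ 2] := by
  refine inv_eq_left_inv ?_
  rw [indMetric_eq, diagonal_mul_diagonal, ← diagonal_one]
  congr 1
  funext i
  fin_cases i <;> simp [(cosh_pos z).ne']

lemma inv_indMetric_contract_mink_secondDerivs (n : Fin 4 → ℝ) :
    (indMetric t₀ x₀ y z)⁻¹ 0 0 * mink n (dyy t₀ x₀ y z)
      + (indMetric t₀ x₀ y z)⁻¹ 0 1 * mink n (dyz t₀ x₀ y z)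
      + (indMetric t₀ x₀ y z)⁻¹ 1 0 * mink n (dzy t₀ x₀ y z)
      + (indMetric t₀ x₀ y z)⁻¹ 1 1 * mink n (dzz t₀ x₀ y z) = n 0 := by
  rw [indMetric_inv, dyy_eq, dyz_eq, dzy_eq, dzz_eq]
  simp [mink, mul_comm (n 0), (cosh_pos z).ne']

def meanCurvature : Fin 4 → ℝ := ![cosh z ^ 2, 0, 0, -(sinh z * cosh z)]

lemma mink_meanCurvature_ey : mink (meanCurvature z) (ey t₀ x₀ y z) = 0 := by
  rw [meanCurvature, ey_eq, mink_vec]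
  ring

lemma mink_meanCurvature_ez : mink (meanCurvature z) (ez t₀ x₀ y z) = 0 := by
  rw [meanCurvature, ez_eq, mink_vec, tanh_eq_sinh_div_cosh]
  field_simp
  ring

lemma mink_meanCurvature_self : mink (meanCurvature z) (meanCurvature z) = -cosh z ^ 2 := by
  rw [meanCurvature, mink_vec]
  linear_combination (-cosh z ^ 2) * cosh_sq_sub_sinh_sq z

lemma mink_meanCurvature_of_mink_ez_eq_zero (n : Fin 4 → ℝ)
    (hz : mink n (ez t₀ x₀ y z) = 0) : mink n (meanCurvature z) = -n 0 := by
  rw [ez_eq, mink_vec_right, tanh_eq_sinh_div_cosh] at hz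
  field_simp at hz
  rw [meanCurvature, mink_vec_right]
  linear_combination (-sinh z) * hz - n 0 * cosh_sq_sub_sinh_sq z

end Surface

/-- The surface x = x₀, e^{t₀−t} = cosh z in Minkowski spacetime is
spacelike (its induced metric is positive definite), and at every point its mean
curvature vector H — the unique normal vector satisfying
g(n,H) = −γ^{AB} g(n, ∂_A∂_B Φ) for all normals n — is future-pointing timelike:
g(H,H) < 0 and H⁰ > 0.  Thus the surface is future-trapped (and non-compact). -/
theorem hyperboloidal_surface_is_future_trapped (t₀ x₀ : ℝ) (y z : ℝ) :
    (indMetric t₀ x₀ y z).PosDef ∧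
    ∃ H : Fin 4 → ℝ,
      mink H (ey t₀ x₀ y z) = 0 ∧
      mink H (ez t₀ x₀ y z) = 0 ∧
      (∀ nv : Fin 4 → ℝ, mink nv (ey t₀ x₀ y z) = 0 → mink nv (ez t₀ x₀ y z) = 0 →
        mink nv H = -((indMetric t₀ x₀ y z)⁻¹ 0 0 * mink nv (dyy t₀ x₀ y z)
                    + (indMetric t₀ x₀ y z)⁻¹ 0 1 * mink nv (dyz t₀ x₀ y z)
                    + (indMetric t₀ x₀ y z)⁻¹ 1 0 * mink nv (dzy t₀ x₀ y z)
                    + (indMetric t₀ x₀ y z)⁻¹ 1 1 * mink nv (dzz t₀ x₀ y z))) ∧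
      mink H H < 0 ∧ 0 < H 0 := by
  have hcosh := cosh_pos z
  refine ⟨?_, meanCurvature z, mink_meanCurvature_ey t₀ x₀ y z,
    mink_meanCurvature_ez t₀ x₀ y z, fun nv _ hz => ?_, ?_, ?_⟩
  · rw [indMetric_eq, posDef_diagonal_iff]
    intro i
    fin_cases i <;> simp [hcosh]
  · rw [mink_meanCurvature_of_mink_ez_eq_zero t₀ x₀ y z nv hz,
      inv_indMetric_contract_mink_secondDerivs]
  · rw [mink_meanCurvature_self]
    nlinarith
  · simp [meanCurvature, hcosh]
end
end

section
/- For a surface of revolution in 3-dimensional Minkowski space given as a graph t = h(r) over the spacelike plane (a 'hyperboloid-like' hypersurface with positive-definite second fundamental form), no future-trapped curve/surface can touch it tangentially from its past at a single point: at a point of tangency where the trapped submanifold lies locally to the past of the hypersurface, the mean curvature vector cannot be future-pointing timelike. -/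
open Filter Set

noncomputable section

/-- Minkowski inner product on ℝ^{1,2}, signature (−,+,+). -/
def mink3 (u w : Fin 3 → ℝ) : ℝ := -(u 0 * w 0) + u 1 * w 1 + u 2 * w 2

/-- Tangent vector of a curve Φ in 3-dimensional Minkowski space. -/
def tangent (Φ : ℝ → Fin 3 → ℝ) (s : ℝ) : Fin 3 → ℝ := fun i => deriv (fun u => Φ u i) s

/-- Acceleration vector of a curve Φ. -/
def accel (Φ : ℝ → Fin 3 → ℝ) (s : ℝ) : Fin 3 → ℝ := fun i => deriv (fun u => tangent Φ u i) s

/-- Mean curvature vector of a spacelike curve (codimension-two submanifold of the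
3-dimensional spacetime), H = γ^{11}K_{11} = −(1/g(Φ',Φ')) (Φ'')^⊥. -/
def meanCurv (Φ : ℝ → Fin 3 → ℝ) (s : ℝ) : Fin 3 → ℝ := fun i =>
  -(1 / mink3 (tangent Φ s) (tangent Φ s)) *
    (accel Φ s i - (mink3 (accel Φ s) (tangent Φ s) / mink3 (tangent Φ s) (tangent Φ s))
      * tangent Φ s i)

lemma second_deriv_nonneg_of_isLocalMin {f f' : ℝ → ℝ} {s₀ c : ℝ}
    (hf : ∀ s, HasDerivAt f (f' s) s) (hf' : HasDerivAt f' c s₀)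
    (h0 : f' s₀ = 0) (hmin : IsLocalMin f s₀) : 0 ≤ c := by
  by_contra hc
  push_neg at hc
  have hslope : Tendsto (slope f' s₀) (nhdsWithin s₀ (Set.Ioi s₀)) (nhds c) :=
    (hasDerivAt_iff_tendsto_slope.mp hf').mono_left
      (nhdsWithin_mono _ (fun x hx => ne_of_gt hx))
  have h2 : ∀ᶠ s in nhdsWithin s₀ (Set.Ioi s₀), slope f' s₀ s < c / 2 :=
    hslope.eventually_lt_const (by linarith)
  have h3 : ∀ᶠ s in nhdsWithin s₀ (Set.Ioi s₀), f' s < 0 := by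
    filter_upwards [h2, self_mem_nhdsWithin] with s hs hs'
    rw [slope_def_field] at hs
    have hpos : 0 < s - s₀ := sub_pos.mpr hs'
    have hlt : (f' s - f' s₀) / (s - s₀) < 0 := lt_trans hs (by linarith)
    rw [h0, sub_zero] at hlt
    rcases (div_neg_iff).mp hlt with ⟨h4, h5⟩ | ⟨h4, h5⟩
    · linarith
    · exact h4
  obtain ⟨u, hu, hIoo⟩ := mem_nhdsGT_iff_exists_Ioo_subset.mp h3
  obtain ⟨ε, hε, hball⟩ := Metric.eventually_nhds_iff.mp hmin
  set b := min (s₀ + ε / 2) ((s₀ + u) / 2) with hb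
  have hub : s₀ < u := hu
  have hb1 : s₀ < b := by apply lt_min <;> [linarith; linarith]
  have hb2 : b < u := by
    have := min_le_right (s₀ + ε / 2) ((s₀ + u) / 2)
    calc b ≤ (s₀ + u) / 2 := this
    _ < u := by linarith
  have hb3 : b - s₀ < ε := by
    have := min_le_left (s₀ + ε / 2) ((s₀ + u) / 2)
    linarith
  have hanti : StrictAntiOn f (Set.Icc s₀ b) := by
    apply strictAntiOn_of_deriv_neg (convex_Icc _ _)
    · exact fun x _ => (hf x).continuousAt.continuousWithinAt
    · intro x hx
      rw [interior_Icc] at hx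
      rw [(hf x).deriv]
      exact hIoo ⟨hx.1, lt_trans hx.2 hb2⟩
  have hlt : f b < f s₀ :=
    hanti (Set.left_mem_Icc.mpr (le_of_lt hb1)) ⟨le_of_lt hb1, le_refl b⟩ hb1
  have hge : f s₀ ≤ f b := hball (by rw [Real.dist_eq, abs_of_pos (by linarith)]; linarith)
  linarith

/-- In 3-dimensional Minkowski space, let Σ be the 'hyperboloid-like'
graph t = h(x,y) over the spacelike plane, spacelike (|∇h| < 1) and with positive
semi-definite second fundamental form (Hessian of h ⪰ 0), with associated time function
τ(p) = p⁰ − h(p¹,p²) whose level sets are the translates of Σ.  Then a future-trapped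
spacelike curve Φ (mean curvature vector future-pointing timelike everywhere) cannot
touch a level set of τ tangentially from its past at a single point: τ∘Φ has no local
minimum. -/
theorem trapped_curve_no_touching_from_past
    (Φ : ℝ → Fin 3 → ℝ) (h : ℝ × ℝ → ℝ)
    (hΦ : ∀ i, ContDiff ℝ (⊤ : ℕ∞) (fun s => Φ s i))
    (hh : ContDiff ℝ (⊤ : ℕ∞) h)
    (hspace : ∀ s, 0 < mink3 (tangent Φ s) (tangent Φ s))  -- Φ spacelike
    (htrapped : ∀ s, mink3 (meanCurv Φ s) (meanCurv Φ s) < 0 ∧ 0 < meanCurv Φ s 0)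
    (hSigmaSpacelike : ∀ p : ℝ × ℝ, (fderiv ℝ h p (1, 0))^2 + (fderiv ℝ h p (0, 1))^2 < 1)
    (hconvex : ∀ (p w : ℝ × ℝ), 0 ≤ fderiv ℝ (fun q => fderiv ℝ h q w) p w) :
    ∀ s₀ : ℝ, ¬ IsLocalMin (fun s => Φ s 0 - h (Φ s 1, Φ s 2)) s₀ := by
  intro s₀ hmin
  -- basic smoothness facts
  have hΦ' : ∀ i, ContDiff ℝ (↑(⊤ : ℕ∞)) (fun s => Φ s i) := fun i => (hΦ i).of_le (by simp)
  have hh' : ContDiff ℝ (↑(⊤ : ℕ∞)) h := hh.of_le (by simp)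
  have hT : ∀ i s, HasDerivAt (fun u => Φ u i) (tangent Φ s i) s := fun i s =>
    (((hΦ' i).differentiable (by simp)) s).hasDerivAt
  have hTc : ∀ i, ContDiff ℝ (↑(⊤ : ℕ∞)) (fun s => tangent Φ s i) := fun i =>
    (contDiff_infty_iff_deriv.mp (hΦ' i)).2
  have hA : ∀ i s, HasDerivAt (fun u => tangent Φ u i) (accel Φ s i) s := fun i s =>
    (((hTc i).differentiable (by simp)) s).hasDerivAt
  set p : ℝ → ℝ × ℝ := fun s => (Φ s 1, Φ s 2) with hpdef
  have hpD : ∀ s, HasDerivAt p (tangent Φ s 1, tangent Φ s 2) s := fun s =>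
    (hT 1 s).prodMk (hT 2 s)
  have hhd : Differentiable ℝ h := hh'.differentiable (by simp)
  set F' : ℝ → ℝ := fun s =>
    tangent Φ s 0 - fderiv ℝ h (p s) (tangent Φ s 1, tangent Φ s 2) with hF'def
  have hf' : ∀ s, HasDerivAt (fun s => Φ s 0 - h (Φ s 1, Φ s 2)) (F' s) s := fun s =>
    (hT 0 s).sub (((hhd (p s)).hasFDerivAt).comp_hasDerivAt s (hpD s))
  have hfd : ContDiff ℝ (↑(⊤ : ℕ∞)) (fderiv ℝ h) := hh'.fderiv_right (by exact_mod_cast le_top)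
  set w : ℝ × ℝ := (tangent Φ s₀ 1, tangent Φ s₀ 2) with hwdef
  have hcD : HasDerivAt (fun s => fderiv ℝ h (p s)) (fderiv ℝ (fderiv ℝ h) (p s₀) w) s₀ :=
    ((hfd.differentiable (by simp)) (p s₀)).hasFDerivAt.comp_hasDerivAt s₀ (hpD s₀)
  have huD : HasDerivAt (fun s => (tangent Φ s 1, tangent Φ s 2))
      (accel Φ s₀ 1, accel Φ s₀ 2) s₀ := (hA 1 s₀).prodMk (hA 2 s₀)
  have hGd : HasDerivAt (fun s => fderiv ℝ h (p s) (tangent Φ s 1, tangent Φ s 2))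
      (fderiv ℝ (fderiv ℝ h) (p s₀) w w + fderiv ℝ h (p s₀) (accel Φ s₀ 1, accel Φ s₀ 2)) s₀ :=
    hcD.clm_apply huD
  have hf'' : HasDerivAt F'
      (accel Φ s₀ 0 - (fderiv ℝ (fderiv ℝ h) (p s₀) w w
        + fderiv ℝ h (p s₀) (accel Φ s₀ 1, accel Φ s₀ 2))) s₀ :=
    (hA 0 s₀).sub hGd
  -- first derivative vanishes
  have hder0 : F' s₀ = 0 := ((hf' s₀).deriv).symm.trans hmin.deriv_eq_zero
  -- second derivative nonnegative
  have hsec : 0 ≤ accel Φ s₀ 0 - (fderiv ℝ (fderiv ℝ h) (p s₀) w w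
      + fderiv ℝ h (p s₀) (accel Φ s₀ 1, accel Φ s₀ 2)) :=
    second_deriv_nonneg_of_isLocalMin hf' hf'' hder0 hmin
  -- convexity: the Hessian term is nonnegative
  have hQ : 0 ≤ fderiv ℝ (fderiv ℝ h) (p s₀) w w := by
    have h0 := hconvex (p s₀) w
    have heq : fderiv ℝ (fun q => fderiv ℝ h q w) (p s₀)
        = (fderiv ℝ h (p s₀)).comp (fderiv ℝ (fun _ : ℝ × ℝ => w) (p s₀))
          + (fderiv ℝ (fderiv ℝ h) (p s₀)).flip w :=
      fderiv_clm_apply ((hfd.differentiable (by simp)).differentiableAt)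
        (differentiableAt_const w)
    rw [heq] at h0
    simpa using h0
  -- linearity of the differential
  set h1v : ℝ := fderiv ℝ h (p s₀) (1, 0) with h1vdef
  set h2v : ℝ := fderiv ℝ h (p s₀) (0, 1) with h2vdef
  have Dlin : ∀ v1 v2 : ℝ, fderiv ℝ h (p s₀) (v1, v2) = v1 * h1v + v2 * h2v := by
    intro v1 v2
    have e : (v1, v2) = v1 • ((1 : ℝ), (0 : ℝ)) + v2 • ((0 : ℝ), (1 : ℝ)) := by
      simp [Prod.ext_iff]
    rw [e, map_add, map_smul, map_smul, smul_eq_mul, smul_eq_mul, h1vdef, h2vdef]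
  -- abbreviations
  set t0 : ℝ := tangent Φ s₀ 0 with ht0'
  set t1 : ℝ := tangent Φ s₀ 1 with ht1'
  set t2 : ℝ := tangent Φ s₀ 2 with ht2'
  set a0 : ℝ := accel Φ s₀ 0 with ha0'
  set a1 : ℝ := accel Φ s₀ 1 with ha1'
  set a2 : ℝ := accel Φ s₀ 2 with ha2'
  have ht0 : t0 = t1 * h1v + t2 * h2v := by
    have := hder0
    rw [hF'def] at this
    simp only [hwdef] at this ⊢
    rw [Dlin t1 t2] at this
    linarith
  have hτA : 0 ≤ a0 - (a1 * h1v + a2 * h2v) := by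
    rw [Dlin a1 a2] at hsec
    linarith
  -- the trapped condition
  obtain ⟨hHt, hH0⟩ := htrapped s₀
  set g : ℝ := mink3 (tangent Φ s₀) (tangent Φ s₀) with hgdef
  set k : ℝ := mink3 (accel Φ s₀) (tangent Φ s₀) with hkdef
  have hg : 0 < g := hspace s₀
  have hHdef : ∀ i, meanCurv Φ s₀ i
      = -(1 / g) * (accel Φ s₀ i - (k / g) * tangent Φ s₀ i) := fun i => rfl
  set H0 : ℝ := meanCurv Φ s₀ 0 with hH0'
  set H1 : ℝ := meanCurv Φ s₀ 1 with hH1'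
  set H2 : ℝ := meanCurv Φ s₀ 2 with hH2'
  have hHt' : -(H0 * H0) + H1 * H1 + H2 * H2 < 0 := hHt
  have hSig : h1v ^ 2 + h2v ^ 2 < 1 := hSigmaSpacelike (p s₀)
  -- future-pointing timelike ⇒ positive pairing with dτ
  have hE1 : 0 < H0 - (h1v * H1 + h2v * H2) := by
    nlinarith [sq_nonneg (h1v * H2 - h2v * H1), sq_nonneg (H1 * H1 + H2 * H2),
      sq_nonneg H1, sq_nonneg H2, mul_pos hH0 hH0,
      sq_nonneg (h1v * H1 + h2v * H2 - H0), sq_nonneg (h1v * H1 + h2v * H2)]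
  -- but the computation gives it is ≤ 0
  have hE2 : H0 - (h1v * H1 + h2v * H2) = -(1 / g) * (a0 - (a1 * h1v + a2 * h2v)) := by
    rw [hH0', hH1', hH2', hHdef 0, hHdef 1, hHdef 2, ← ht0', ← ht1', ← ht2',
      ← ha0', ← ha1', ← ha2', ht0]
    field_simp
    ring
  rw [hE2] at hE1
  have hfinal : -(1 / g) * (a0 - (a1 * h1v + a2 * h2v)) ≤ 0 := by
    have h1g : 0 ≤ 1 / g := (one_div_pos.mpr hg).le
    have := mul_nonneg h1g hτA
    linarith
  linarith
end
end
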